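/- Fix d ∈ ℕ, d ≥ 1. Define sequences by b₁⁽¹⁾ = b₁⁽²⁾ := 1 and, for n ≥ 2, bₙ⁽¹⁾ := (n−1)⁻¹ Σ_{n₁+n₂=n, n₁,n₂≥1} min(n₁,n₂)^{(d+5)/2} b_{n₁}⁽¹⁾ b_{n₂}⁽²⁾ and bₙ⁽²⁾ := n(n−1)⁻¹ Σ_{n₁+n₂=n, n₁,n₂≥1} min(n₁,n₂)^{(d+5)/2} b_{n₁}⁽¹⁾ b_{n₂}⁽¹⁾. Then for all n ≥ 1, bₙ⁽¹⁾ ≤ n^{−(d+5)/2−2} (2^{(d+5)/2+5})^{n−1} ≤ (2^{(d+15)/2})^{n}, and the same bounds hold for bₙ⁽²⁾; in particular there is a constant C_b > 0 (depending only on d) with bₙ⁽¹⁾, bₙ⁽²⁾ ≤ C_bⁿ for all n ≥ 1. -/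

import Mathlib

/-!
With `α = (d+5)/2` and `M = 2^(α+5)`, strong induction shows that both sequences are bounded by
`B n = n^(-α-2) M^(n-1)`. In the convolution the weight `min(k, n-k)^α` cancels the smaller index's
factor of `B` down to an inverse square, while the larger index is at least `n/2`, so
`min(k, n-k)^α B k B (n-k) ≤ (k⁻² + (n-k)⁻²) (n/2)^(-α-2) M^(n-2)`. Since `∑ k⁻² ≤ 2`, the whole
convolution is at most `4 (n/2)^(-α-2) M^(n-2) = B n / 2`, and the prefactors `1/(n-1)` and
`n/(n-1)` are at most `2`.
-/

open Finset

lemma sum_Ico_one_inv_sq_le_two (n : ℕ) : ∑ k ∈ Ico 1 n, ((k : ℝ) ^ 2)⁻¹ ≤ 2 := by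
  simpa [← Finset.Ico_add_one_left_eq_Ioo] using sum_Ioo_inv_sq_le (α := ℝ) 0 n

lemma min_rpow_mul_rpow_mul_rpow_le {α x y : ℝ} (hα : -2 ≤ α) (hx : 0 < x) (hy : 0 < y) :
    min x y ^ α * x ^ (-α - 2) * y ^ (-α - 2) ≤
      ((x ^ 2)⁻¹ + (y ^ 2)⁻¹) * ((x + y) / 2) ^ (-α - 2) := by
  wlog hxy : x ≤ y generalizing x y
  · have := this hy hx (le_of_not_ge hxy)
    rw [min_comm, add_comm y, add_comm (y ^ 2)⁻¹] at this
    linarith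
  have hx2 : x ^ α * x ^ (-α - 2) = (x ^ 2)⁻¹ := by
    rw [← Real.rpow_add hx, show α + (-α - 2) = -2 by ring, Real.rpow_neg hx.le]
    norm_cast
  have hy2 : y ^ (-α - 2) ≤ ((x + y) / 2) ^ (-α - 2) :=
    Real.rpow_le_rpow_of_nonpos (by positivity) (by linarith) (by linarith)
  rw [min_eq_left hxy, hx2]
  calc (x ^ 2)⁻¹ * y ^ (-α - 2) ≤ (x ^ 2)⁻¹ * ((x + y) / 2) ^ (-α - 2) := by gcongr
    _ ≤ ((x ^ 2)⁻¹ + (y ^ 2)⁻¹) * ((x + y) / 2) ^ (-α - 2) := by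
      gcongr
      exact le_add_of_nonneg_right (by positivity)

noncomputable def growthBound (α : ℝ) (n : ℕ) : ℝ :=
  (n : ℝ) ^ (-α - 2) * ((2 : ℝ) ^ (α + 5)) ^ (n - 1)

lemma growthBound_nonneg (α : ℝ) (n : ℕ) : 0 ≤ growthBound α n := by
  unfold growthBound; positivity

lemma growthBound_mul_growthBound (α : ℝ) {k n : ℕ} (hk : 1 ≤ k) (hkn : k < n) :
    growthBound α k * growthBound α (n - k) =
      (k : ℝ) ^ (-α - 2) * ((n : ℝ) - k) ^ (-α - 2) * ((2 : ℝ) ^ (α + 5)) ^ (n - 2) := by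
  have hexp : n - 2 = (k - 1) + (n - k - 1) := by omega
  rw [growthBound, growthBound, Nat.cast_sub hkn.le, hexp, pow_add]
  ring

lemma growthBound_eq_eight_mul (α : ℝ) {n : ℕ} (hn : 2 ≤ n) :
    growthBound α n = 8 * ((n : ℝ) / 2) ^ (-α - 2) * ((2 : ℝ) ^ (α + 5)) ^ (n - 2) := by
  have h2 : (2 : ℝ) ^ (α + 5) = 8 * ((2 : ℝ) ^ (-α - 2))⁻¹ := by
    rw [← Real.rpow_neg (by norm_num : (0 : ℝ) ≤ 2) (-α - 2), show -(-α - 2) = α + 2 by ring,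
      show α + 5 = α + 2 + (3 : ℕ) by push_cast; ring, Real.rpow_add (by norm_num),
      Real.rpow_natCast]
    ring
  have hexp : n - 1 = (n - 2) + 1 := by omega
  rw [growthBound, Real.div_rpow (by positivity) (by norm_num), hexp, pow_succ]
  nth_rewrite 2 [h2]
  field_simp

lemma growthBound_le_pow {α : ℝ} (hα : -2 ≤ α) {n : ℕ} (hn : 1 ≤ n) :
    growthBound α n ≤ ((2 : ℝ) ^ (α + 5)) ^ n := by
  have hM : 1 ≤ (2 : ℝ) ^ (α + 5) := Real.one_le_rpow (by norm_num) (by linarith)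
  calc growthBound α n ≤ 1 * ((2 : ℝ) ^ (α + 5)) ^ (n - 1) := by
        unfold growthBound
        gcongr
        exact Real.rpow_le_one_of_one_le_of_nonpos (by exact_mod_cast hn) (by linarith)
    _ ≤ ((2 : ℝ) ^ (α + 5)) ^ n := by
        rw [one_mul]
        exact pow_le_pow_right₀ hM (Nat.sub_le n 1)

noncomputable def weightedConv (α : ℝ) (f g : ℕ → ℝ) (n : ℕ) : ℝ :=
  ∑ k ∈ Ico 1 n, min (k : ℝ) (n - k) ^ α * f k * g (n - k)

lemma sub_mem_Ico_one {k n : ℕ} (hk : k ∈ Ico 1 n) : n - k ∈ Ico 1 n := by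
  simp only [mem_Ico] at hk ⊢
  omega

lemma weightedConv_nonneg (α : ℝ) {n : ℕ} {f g : ℕ → ℝ} (hf : ∀ k ∈ Ico 1 n, 0 ≤ f k)
    (hg : ∀ k ∈ Ico 1 n, 0 ≤ g k) : 0 ≤ weightedConv α f g n := by
  refine sum_nonneg fun k hk => ?_
  have hkn : (k : ℝ) ≤ n := by exact_mod_cast (mem_Ico.mp hk).2.le
  have hmin : 0 ≤ min (k : ℝ) (n - k) := le_min k.cast_nonneg (by linarith)
  have := hf k hk
  have := hg (n - k) (sub_mem_Ico_one hk)
  positivity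

lemma weightedConv_le_half_growthBound {α : ℝ} (hα : -2 ≤ α) {n : ℕ} (hn : 2 ≤ n)
    {f g : ℕ → ℝ} (hf : ∀ k ∈ Ico 1 n, 0 ≤ f k ∧ f k ≤ growthBound α k)
    (hg : ∀ k ∈ Ico 1 n, 0 ≤ g k ∧ g k ≤ growthBound α k) :
    weightedConv α f g n ≤ growthBound α n / 2 := by
  set c : ℝ := ((n : ℝ) / 2) ^ (-α - 2) * ((2 : ℝ) ^ (α + 5)) ^ (n - 2)
  have hterm : ∀ k ∈ Ico 1 n, min (k : ℝ) (n - k) ^ α * f k * g (n - k) ≤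
      (((k : ℝ) ^ 2)⁻¹ + (((n - k : ℕ) : ℝ) ^ 2)⁻¹) * c := by
    intro k hk
    obtain ⟨hk1, hkn⟩ := mem_Ico.mp hk
    have hcast : ((n - k : ℕ) : ℝ) = n - k := Nat.cast_sub hkn.le
    have hkpos : (0 : ℝ) < k := by exact_mod_cast hk1
    have hnkpos : (0 : ℝ) < n - k := by
      rw [← hcast]
      exact_mod_cast (by omega : 0 < n - k)
    obtain ⟨hf0, hfB⟩ := hf k hk
    obtain ⟨hg0, hgB⟩ := hg (n - k) (sub_mem_Ico_one hk)
    calc min (k : ℝ) (n - k) ^ α * f k * g (n - k)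
        ≤ min (k : ℝ) (n - k) ^ α * growthBound α k * growthBound α (n - k) := by
          have := growthBound_nonneg α k
          have : 0 ≤ min (k : ℝ) (n - k) := le_min hkpos.le hnkpos.le
          gcongr
      _ = min (k : ℝ) (n - k) ^ α * (k : ℝ) ^ (-α - 2) * ((n : ℝ) - k) ^ (-α - 2) *
            ((2 : ℝ) ^ (α + 5)) ^ (n - 2) := by
          rw [mul_assoc _ (growthBound α k), growthBound_mul_growthBound α hk1 hkn]
          ring
      _ ≤ (((k : ℝ) ^ 2)⁻¹ + (((n : ℝ) - k) ^ 2)⁻¹) * ((n : ℝ) / 2) ^ (-α - 2) *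
            ((2 : ℝ) ^ (α + 5)) ^ (n - 2) := by
          refine mul_le_mul_of_nonneg_right ?_ (by positivity)
          simpa using min_rpow_mul_rpow_mul_rpow_le hα hkpos hnkpos
      _ = (((k : ℝ) ^ 2)⁻¹ + (((n - k : ℕ) : ℝ) ^ 2)⁻¹) * c := by
          rw [hcast]
          ring
  have hreflect : ∑ k ∈ Ico 1 n, (((n - k : ℕ) : ℝ) ^ 2)⁻¹ = ∑ k ∈ Ico 1 n, ((k : ℝ) ^ 2)⁻¹ := by
    simpa using sum_Ico_reflect (fun j => ((j : ℝ) ^ 2)⁻¹) 1 (Nat.le_succ n)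
  calc weightedConv α f g n ≤ ∑ k ∈ Ico 1 n, (((k : ℝ) ^ 2)⁻¹ + (((n - k : ℕ) : ℝ) ^ 2)⁻¹) * c :=
        sum_le_sum hterm
    _ = 2 * (∑ k ∈ Ico 1 n, ((k : ℝ) ^ 2)⁻¹) * c := by
        rw [← sum_mul, sum_add_distrib, hreflect, two_mul]
    _ ≤ 2 * 2 * c := by
        have : 0 ≤ c := by positivity
        gcongr
        exact sum_Ico_one_inv_sq_le_two n
    _ = growthBound α n / 2 := by
        rw [growthBound_eq_eight_mul α hn]
        ring

lemma le_growthBound_of_rec {α : ℝ} (hα : -2 ≤ α) {b₁ b₂ : ℕ → ℝ}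
    (h₁ : b₁ 1 = 1) (h₂ : b₂ 1 = 1)
    (hrec₁ : ∀ n, 2 ≤ n → b₁ n = 1 / ((n : ℝ) - 1) * weightedConv α b₁ b₂ n)
    (hrec₂ : ∀ n, 2 ≤ n → b₂ n = (n : ℝ) / ((n : ℝ) - 1) * weightedConv α b₁ b₁ n) :
    ∀ n, 1 ≤ n → (0 ≤ b₁ n ∧ b₁ n ≤ growthBound α n) ∧ (0 ≤ b₂ n ∧ b₂ n ≤ growthBound α n) := by
  intro n hn
  induction n using Nat.strong_induction_on with
  | _ n ih =>
  obtain rfl | hn2 := hn.eq_or_lt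
  · simp [h₁, h₂, growthBound]
  have hb₁ : ∀ k ∈ Ico 1 n, 0 ≤ b₁ k ∧ b₁ k ≤ growthBound α k :=
    fun k hk => (ih k (mem_Ico.mp hk).2 (mem_Ico.mp hk).1).1
  have hb₂ : ∀ k ∈ Ico 1 n, 0 ≤ b₂ k ∧ b₂ k ≤ growthBound α k :=
    fun k hk => (ih k (mem_Ico.mp hk).2 (mem_Ico.mp hk).1).2
  have hS₁ := weightedConv_nonneg α (fun k hk => (hb₁ k hk).1) (fun k hk => (hb₂ k hk).1)
  have hS₂ := weightedConv_nonneg α (fun k hk => (hb₁ k hk).1) (fun k hk => (hb₁ k hk).1)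
  have hn : (2 : ℝ) ≤ n := by exact_mod_cast hn2
  have hn1 : (0 : ℝ) < n - 1 := by linarith
  have hscale : ∀ c S : ℝ, 0 ≤ c → c ≤ 2 → 0 ≤ S → S ≤ growthBound α n / 2 →
      0 ≤ c * S ∧ c * S ≤ growthBound α n := fun c S hc0 hc2 hS0 hS =>
    ⟨mul_nonneg hc0 hS0, by nlinarith⟩
  rw [hrec₁ n hn2, hrec₂ n hn2]
  exact ⟨hscale _ _ (by positivity) (by rw [div_le_iff₀ hn1]; linarith) hS₁
      (weightedConv_le_half_growthBound hα hn2 hb₁ hb₂),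
    hscale _ _ (by positivity) (by rw [div_le_iff₀ hn1]; linarith) hS₂
      (weightedConv_le_half_growthBound hα hn2 hb₁ hb₁)⟩

theorem statement_1_general (d : ℕ) (b₁ b₂ : ℕ → ℝ)
    (h₁ : b₁ 1 = 1) (h₂ : b₂ 1 = 1)
    (hrec₁ : ∀ n, 2 ≤ n → b₁ n = 1 / ((n : ℝ) - 1) *
      ∑ k ∈ Finset.Ico 1 n, (min k (n - k) : ℝ) ^ (((d : ℝ) + 5) / 2) * b₁ k * b₂ (n - k))
    (hrec₂ : ∀ n, 2 ≤ n → b₂ n = (n : ℝ) / ((n : ℝ) - 1) *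
      ∑ k ∈ Finset.Ico 1 n, (min k (n - k) : ℝ) ^ (((d : ℝ) + 5) / 2) * b₁ k * b₁ (n - k)) :
    (∀ n, 1 ≤ n →
      (b₁ n ≤ (n : ℝ) ^ (-(((d : ℝ) + 5) / 2) - 2) * ((2 : ℝ) ^ (((d : ℝ) + 5) / 2 + 5)) ^ (n - 1) ∧
        b₂ n ≤ (n : ℝ) ^ (-(((d : ℝ) + 5) / 2) - 2) * ((2 : ℝ) ^ (((d : ℝ) + 5) / 2 + 5)) ^ (n - 1)) ∧
      (n : ℝ) ^ (-(((d : ℝ) + 5) / 2) - 2) * ((2 : ℝ) ^ (((d : ℝ) + 5) / 2 + 5)) ^ (n - 1) ≤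
        ((2 : ℝ) ^ (((d : ℝ) + 15) / 2)) ^ n) ∧
    ∃ C : ℝ, 0 < C ∧ ∀ n, 1 ≤ n → b₁ n ≤ C ^ n ∧ b₂ n ≤ C ^ n := by
  have hα : -2 ≤ ((d : ℝ) + 5) / 2 := by linarith [d.cast_nonneg (α := ℝ)]
  have hb := le_growthBound_of_rec hα h₁ h₂ hrec₁ hrec₂
  have hB : ∀ n, 1 ≤ n → growthBound (((d : ℝ) + 5) / 2) n ≤ ((2 : ℝ) ^ (((d : ℝ) + 15) / 2)) ^ n :=
    fun n hn => by
      rw [show ((d : ℝ) + 15) / 2 = ((d : ℝ) + 5) / 2 + 5 by ring]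
      exact growthBound_le_pow hα hn
  refine ⟨fun n hn => ⟨⟨(hb n hn).1.2, (hb n hn).2.2⟩, hB n hn⟩,
    (2 : ℝ) ^ (((d : ℝ) + 15) / 2), by positivity, fun n hn => ?_⟩
  exact ⟨(hb n hn).1.2.trans (hB n hn), (hb n hn).2.2.trans (hB n hn)⟩

theorem statement_1 (d : ℕ) (hd : 1 ≤ d) (b₁ b₂ : ℕ → ℝ)
    (h₁ : b₁ 1 = 1) (h₂ : b₂ 1 = 1)
    (hrec₁ : ∀ n, 2 ≤ n → b₁ n = 1 / ((n : ℝ) - 1) *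
      ∑ k ∈ Finset.Ico 1 n, (min k (n - k) : ℝ) ^ (((d : ℝ) + 5) / 2) * b₁ k * b₂ (n - k))
    (hrec₂ : ∀ n, 2 ≤ n → b₂ n = (n : ℝ) / ((n : ℝ) - 1) *
      ∑ k ∈ Finset.Ico 1 n, (min k (n - k) : ℝ) ^ (((d : ℝ) + 5) / 2) * b₁ k * b₁ (n - k)) :
    (∀ n, 1 ≤ n →
      (b₁ n ≤ (n : ℝ) ^ (-(((d : ℝ) + 5) / 2) - 2) * ((2 : ℝ) ^ (((d : ℝ) + 5) / 2 + 5)) ^ (n - 1) ∧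
        b₂ n ≤ (n : ℝ) ^ (-(((d : ℝ) + 5) / 2) - 2) * ((2 : ℝ) ^ (((d : ℝ) + 5) / 2 + 5)) ^ (n - 1)) ∧
      (n : ℝ) ^ (-(((d : ℝ) + 5) / 2) - 2) * ((2 : ℝ) ^ (((d : ℝ) + 5) / 2 + 5)) ^ (n - 1) ≤
        ((2 : ℝ) ^ (((d : ℝ) + 15) / 2)) ^ n) ∧
    ∃ C : ℝ, 0 < C ∧ ∀ n, 1 ≤ n → b₁ n ≤ C ^ n ∧ b₂ n ≤ C ^ n :=
  statement_1_general d b₁ b₂ h₁ h₂ hrec₁ hrec₂
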